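/- The threshold of the 10-to-2 distillation routine is p_t ≈ 0.089: there exists p_t ∈ (0.089, 0.090) with e(p_t) = p_t (equivalently u(p_t) = p_t · a(p_t)), and for every p with 0 < p ≤ 0.089 one has e(p) < p (equivalently u(p) < p · a(p)), so the routine strictly improves resource states with error probability up to 0.089. -/
import Mathlib


/-- Acceptance probability of the 10-to-2 distillation routine. -/
def a (p : ℝ) : ℝ :=
  1 - 10*p + 58*p^2 - 192*p^3 + 400*p^4 - 544*p^5 + 480*p^6 - 256*p^7 + 64*p^8

/-- Probability of acceptance together with an error on a fixed output. -/
def u (p : ℝ) : ℝ :=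
  9*p^2 - 56*p^3 + 160*p^4 - 256*p^5 + 240*p^6 - 128*p^7 + 32*p^8

/-- Probability of acceptance together with at least one error on the two outputs. -/
def u2 (p : ℝ) : ℝ :=
  13*p^2 - 80*p^3 + 228*p^4 - 368*p^5 + 352*p^6 - 192*p^7 + 48*p^8

/-- Conditional error probability of one output. -/
noncomputable def e (p : ℝ) : ℝ := u p / a p

/-- Conditional probability of at least one error on the two outputs. -/
noncomputable def e2 (p : ℝ) : ℝ := u2 p / a p

lemma a_pos {p : ℝ} (hp : 0 < p) (h : p ≤ 0.09) : 0 < a p := by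
  simp only [a]
  nlinarith [mul_nonneg (sq_nonneg p) (sub_nonneg.2 h),
    mul_nonneg (pow_nonneg hp.le 4) (sub_nonneg.2 h),
    mul_nonneg (pow_nonneg hp.le 6) (sub_nonneg.2 h),
    pow_nonneg hp.le 8, sq_nonneg p]

lemma g_pos {p : ℝ} (hp : 0 < p) (h : p ≤ 0.089) :
    0 < 1-19*p+114*p^2-352*p^3+656*p^4-784*p^5+608*p^6-288*p^7+64*p^8 := by
  nlinarith [mul_nonneg (pow_nonneg hp.le 4) (sub_nonneg.2 h),
    mul_nonneg (pow_nonneg hp.le 6) (sub_nonneg.2 h),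
    pow_nonneg hp.le 8, sq_nonneg (p - 0.05), sq_nonneg (p^2 - 0.01*p), sq_nonneg p,
    mul_nonneg (sq_nonneg p) (sub_nonneg.2 h), mul_nonneg hp.le (sub_nonneg.2 h),
    mul_nonneg (mul_nonneg (sq_nonneg p) (sub_nonneg.2 h)) (sub_nonneg.2 h),
    mul_nonneg (mul_nonneg hp.le (sub_nonneg.2 h)) (sub_nonneg.2 h)]

lemma u_lt {p : ℝ} (hp : 0 < p) (h : p ≤ 0.089) : u p < p * a p := by
  have hg := g_pos hp h
  have := mul_pos hp hg
  simp only [u, a]; nlinarith [this]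

theorem distillation_threshold :
    (∃ pt : ℝ, pt ∈ Set.Ioo (0.089 : ℝ) 0.090 ∧
      e pt = pt ∧ u pt = pt * a pt) ∧
    ∀ p : ℝ, 0 < p → p ≤ 0.089 → e p < p ∧ u p < p * a p := by
  constructor
  · have hcont : ContinuousOn (fun p : ℝ => u p - p * a p) (Set.Icc 0.089 0.090) := by
      apply Continuous.continuousOn
      simp only [u, a]
      continuity
    have h1 : (fun p : ℝ => u p - p * a p) 0.089 < 0 := by norm_num [u, a]
    have h2 : (0:ℝ) < (fun p : ℝ => u p - p * a p) 0.090 := by norm_num [u, a]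
    have hsub := intermediate_value_Ioo (by norm_num : (0.089:ℝ) ≤ 0.090) hcont
    have : (0:ℝ) ∈ Set.Ioo ((fun p : ℝ => u p - p * a p) 0.089)
        ((fun p : ℝ => u p - p * a p) 0.090) := ⟨h1, h2⟩
    obtain ⟨pt, hpt, hf⟩ := hsub this
    refine ⟨pt, hpt, ?_, ?_⟩
    · have hu : u pt = pt * a pt := by
        have := hf.symm
        simp only at this
        linarith
      have ha : 0 < a pt := a_pos (by linarith [hpt.1] : (0:ℝ) < pt) (by linarith [hpt.2])
      simp only [e, hu]
      field_simp
    · simpa [sub_eq_zero] using hf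
  · intro p hp h
    have hu := u_lt hp h
    have ha : 0 < a p := a_pos hp (by linarith)
    exact ⟨(div_lt_iff₀ ha).2 hu, hu⟩
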